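/- Let L₁, L₂ be recognized by a morphism α : A* → M with accepting sets F₁, F₂. Then L₁ is separable from L₂ by a language upward-closed for the preorder ≤ᵏᵢ (for some k) if and only if for all s₁ ∈ F₁ and s₂ ∈ F₂, the pair (s₁, s₂) is not an i-chain, i.e., there exists k such that no words w₁ ≤ᵏᵢ w₂ have α(w₁)=s₁ and α(w₂)=s₂. -/
import Mathlib


/-- First-order formulas over words on alphabet `A`, with de Bruijn indexed
variables, unary letter predicates `P_a x` and the order predicate `x < y`. -/
inductive FO (A : Type) : Type
  | letter : A → ℕ → FO A
  | lt : ℕ → ℕ → FO A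
  | not : FO A → FO A
  | and : FO A → FO A → FO A
  | or : FO A → FO A → FO A
  | ex : FO A → FO A
  | all : FO A → FO A

namespace FO

variable {A : Type}

/-- Satisfaction of a formula in a word `w` under an assignment `v` of
variables to positions; quantifiers range over the positions of `w`,
`letter a x` holds when position `v x` carries the letter `a`. -/
def Sat (w : List A) : (ℕ → ℕ) → FO A → Prop
  | v, letter a x => w[(v x)]? = some a
  | v, lt x y => v x < v y ∧ v y < w.length
  | v, not φ => ¬ Sat w v φ
  | v, and φ ψ => Sat w v φ ∧ Sat w v ψ
  | v, or φ ψ => Sat w v φ ∨ Sat w v ψ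
  | v, ex φ => ∃ p < w.length, Sat w (fun n => Nat.casesOn n p v) φ
  | v, all φ => ∀ p < w.length, Sat w (fun n => Nat.casesOn n p v) φ

/-- Quantifier rank of a formula. -/
def qr : FO A → ℕ
  | letter _ _ => 0
  | lt _ _ => 0
  | not φ => qr φ
  | and φ ψ => max (qr φ) (qr ψ)
  | or φ ψ => max (qr φ) (qr ψ)
  | ex φ => qr φ + 1
  | all φ => qr φ + 1

/-- A bound on free (de Bruijn) variables: all free variables are `< fvBound φ`. -/
def fvBound : FO A → ℕ
  | letter _ x => x + 1
  | lt x y => max x y + 1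
  | not φ => fvBound φ
  | and φ ψ => max (fvBound φ) (fvBound ψ)
  | or φ ψ => max (fvBound φ) (fvBound ψ)
  | ex φ => fvBound φ - 1
  | all φ => fvBound φ - 1

/-- A sentence is a formula with no free variables. -/
def IsSentence (φ : FO A) : Prop := fvBound φ = 0

/-- Quantifier-free formulas. -/
def QF : FO A → Prop
  | letter _ _ => True
  | lt _ _ => True
  | not φ => QF φ
  | and φ ψ => QF φ ∧ QF ψ
  | or φ ψ => QF φ ∧ QF ψ
  | ex _ => False
  | all _ => False

mutual
  /-- `Σᵢ` formulas: quantifier-free formulas, positive boolean combinations,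
  existential quantification over `Σᵢ` (for `i ≥ 1`), and every `Πᵢ` formula
  is `Σ_{i+1}`; this captures formulas whose prenex normal form has at most
  `i` quantifier blocks starting with an existential block. -/
  inductive IsSigma : ℕ → FO A → Prop
    | of_qf {i : ℕ} {φ : FO A} : QF φ → IsSigma i φ
    | of_pi {i : ℕ} {φ : FO A} : IsPi i φ → IsSigma (i + 1) φ
    | and {i : ℕ} {φ ψ : FO A} : IsSigma i φ → IsSigma i ψ → IsSigma i (FO.and φ ψ)
    | or {i : ℕ} {φ ψ : FO A} : IsSigma i φ → IsSigma i ψ → IsSigma i (FO.or φ ψ)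
    | ex {i : ℕ} {φ : FO A} : IsSigma (i + 1) φ → IsSigma (i + 1) (FO.ex φ)
  /-- `Πᵢ` formulas, dual to `Σᵢ`. -/
  inductive IsPi : ℕ → FO A → Prop
    | of_qf {i : ℕ} {φ : FO A} : QF φ → IsPi i φ
    | of_sigma {i : ℕ} {φ : FO A} : IsSigma i φ → IsPi (i + 1) φ
    | and {i : ℕ} {φ ψ : FO A} : IsPi i φ → IsPi i ψ → IsPi i (FO.and φ ψ)
    | or {i : ℕ} {φ ψ : FO A} : IsPi i φ → IsPi i ψ → IsPi i (FO.or φ ψ)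
    | all {i : ℕ} {φ : FO A} : IsPi (i + 1) φ → IsPi (i + 1) (FO.all φ)
end

/-- The preorder `w ≤ᵏᵢ w'`: every `Σᵢ` sentence of quantifier rank at most
`k` satisfied by `w` is satisfied by `w'`. -/
def sle (i k : ℕ) (w w' : List A) : Prop :=
  ∀ φ : FO A, IsSigma i φ → qr φ ≤ k → IsSentence φ →
    Sat w (fun _ => 0) φ → Sat w' (fun _ => 0) φ

end FO

/-- `(s₁, s₂)` is an `i`-chain for `α` if for every `k` there are words
`w₁ ≤ᵏᵢ w₂` with `α w₁ = s₁` and `α w₂ = s₂`. -/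
def IsChainPair {A M : Type} (i : ℕ) (α : List A → M) (s₁ s₂ : M) : Prop :=
  ∀ k : ℕ, ∃ w₁ w₂ : List A, FO.sle i k w₁ w₂ ∧ α w₁ = s₁ ∧ α w₂ = s₂

/-- Let `L₁ = α⁻¹(F₁)` and `L₂ = α⁻¹(F₂)` be recognized by a morphism
`α : A* → M` into a finite monoid. Then `L₁` is separable from `L₂` by a
language upward closed for `≤ᵏᵢ` for some `k` (i.e. definable in `Σᵢ`) iff no
pair `(s₁, s₂)` with `s₁ ∈ F₁`, `s₂ ∈ F₂` is an `i`-chain for `α`. -/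
theorem separation_iff_no_chain {A : Type} [Fintype A] {M : Type} [Monoid M]
    [Finite M] (i : ℕ) (α : List A → M) (hα1 : α [] = 1)
    (hα : ∀ u v : List A, α (u ++ v) = α u * α v)
    (F₁ F₂ : Set M) (L₁ L₂ : Set (List A))
    (h₁ : L₁ = α ⁻¹' F₁) (h₂ : L₂ = α ⁻¹' F₂) :
    (∃ k : ℕ, ∃ L : Set (List A),
        (∀ w ∈ L, ∀ w' : List A, FO.sle i k w w' → w' ∈ L) ∧
        L₁ ⊆ L ∧ L ∩ L₂ = ∅) ↔
    (∀ s₁ ∈ F₁, ∀ s₂ ∈ F₂, ¬ IsChainPair i α s₁ s₂) := by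
  have sle_mono : ∀ {k k' : ℕ}, k ≤ k' → ∀ {w w' : List A},
      FO.sle i k' w w' → FO.sle i k w w' :=
    fun {k k'} hkk' {w w'} hs φ hσ hqr => hs φ hσ (hqr.trans hkk')
  constructor
  · rintro ⟨k, L, hup, hsub, hdisj⟩ s₁ hs₁ s₂ hs₂ hch
    obtain ⟨w₁, w₂, hle, hw₁, hw₂⟩ := hch k
    have hw₁L : w₁ ∈ L := hsub (by simp [h₁, hw₁, hs₁])
    have hw₂L : w₂ ∈ L := hup w₁ hw₁L w₂ hle
    have hmem : w₂ ∈ L ∩ L₂ := ⟨hw₂L, by simp [h₂, hw₂, hs₂]⟩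
    rw [hdisj] at hmem
    exact hmem
  · intro h
    have hc : ∀ p : M × M, ∃ k : ℕ,
        ¬ (p.1 ∈ F₁ ∧ p.2 ∈ F₂ ∧
          ∃ w₁ w₂ : List A, FO.sle i k w₁ w₂ ∧ α w₁ = p.1 ∧ α w₂ = p.2) := by
      intro p
      by_cases h1 : p.1 ∈ F₁
      · by_cases h2 : p.2 ∈ F₂
        · have hnc := h p.1 h1 p.2 h2
          rw [IsChainPair] at hnc
          push_neg at hnc
          obtain ⟨k, hk⟩ := hnc
          exact ⟨k, fun ⟨_, _, w₁, w₂, hle, he1, he2⟩ =>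
            (hk w₁ w₂ hle he1) he2⟩
        · exact ⟨0, fun hcon => h2 hcon.2.1⟩
      · exact ⟨0, fun hcon => h1 hcon.1⟩
    choose f hf using hc
    cases nonempty_fintype M
    set k := Finset.univ.sup (fun p : M × M => f p) with hkdef
    refine ⟨k, {w' | ∃ w, w ∈ L₁ ∧ FO.sle i k w w'}, ?_, ?_, ?_⟩
    · rintro w ⟨u, hu, hle⟩ w' hle'
      exact ⟨u, hu, fun φ a b c d => hle' φ a b c (hle φ a b c d)⟩
    · intro w hw
      exact ⟨w, hw, fun φ _ _ _ hh => hh⟩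
    · ext w'
      simp only [Set.mem_inter_iff, Set.mem_empty_iff_false, iff_false]
      rintro ⟨⟨w, hwL1, hle⟩, hwL2⟩
      have ha1 : α w ∈ F₁ := by rwa [h₁] at hwL1
      have ha2 : α w' ∈ F₂ := by rwa [h₂] at hwL2
      have hk : f (α w, α w') ≤ k :=
        Finset.le_sup (Finset.mem_univ (α w, α w'))
      exact hf (α w, α w') ⟨ha1, ha2, w, w', sle_mono hk hle, rfl, rfl⟩
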